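/- Let η ∈ (0,1/8], let J ⊆ {2,…,K} be a set of indices with gaps Δ_j ∈ (4η,1] for j ∈ J, and let (Y_{m,j})_{m≥1, j∈J} be such that for each m the vector (Y_{m,j})_{j∈J} is independent of the past, Y_{m,j} ∈ [-1,1], and E[Y_{m,j}] = Δ_j. Define D_{0,j}=0, D_{m,j}=D_{m-1,j}+Y_{m,j}, Z_m = 1 + ∑_{j∈J} exp(-η D_{m,j}), Q_{m,j} = exp(-η D_{m,j})/Z_m, and V_m = ∑_{j∈J} Δ_j Q_{m,j}. Then for every m ≥ 0, E[log Z_{m+1} - log Z_m | F_m] ≤ -η V_m / 4, where F_m is the σ-algebra generated by the first m increments. -/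

import Mathlib

open MeasureTheory ProbabilityTheory

lemma exp_le_quad {x : ℝ} (hx : |x| ≤ 1) : Real.exp x ≤ 1 + x + x ^ 2 := by
  have h := Real.exp_bound hx (n := 2) (by norm_num)
  have hs : ∑ m ∈ Finset.range 2, x ^ m / m.factorial = 1 + x := by
    simp [Finset.sum_range_succ]
  rw [hs] at h
  have h2 : Real.exp x - (1 + x) ≤ |x| ^ 2 * (3 / (2 * 2)) := by
    calc Real.exp x - (1 + x) ≤ |Real.exp x - (1 + x)| := le_abs_self _
    _ ≤ _ := by simpa using h
  have : |x| ^ 2 * (3 / (2 * 2)) ≤ x ^ 2 := by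
    rw [sq_abs]; nlinarith [sq_nonneg x]
  linarith

lemma moment_bound {Ω : Type*} [MeasurableSpace Ω] (μ : Measure Ω) [IsProbabilityMeasure μ]
    {η Δ : ℝ} (hη : 0 < η) (hη8 : η ≤ 1 / 8) (hΔ1 : 4 * η < Δ)
    {Y : Ω → ℝ} (hmeas : Measurable Y) (hb : ∀ ω, Y ω ∈ Set.Icc (-1 : ℝ) 1)
    (hmean : ∫ ω, Y ω ∂μ = Δ) :
    ∫ ω, Real.exp (-η * Y ω) ∂μ ≤ 1 - η * Δ / 4 := by
  have hYint : Integrable Y μ := by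
    refine (integrable_const (1 : ℝ)).mono' hmeas.aestronglyMeasurable (ae_of_all _ fun ω => ?_)
    rw [Real.norm_eq_abs, abs_le]; exact ⟨(hb ω).1, (hb ω).2⟩
  have hpt : ∀ ω, Real.exp (-η * Y ω) ≤ 1 + η ^ 2 - η * Y ω := by
    intro ω
    have hx : |-η * Y ω| ≤ 1 := by
      rw [abs_mul, abs_neg, abs_of_pos hη]
      have : |Y ω| ≤ 1 := abs_le.mpr ⟨(hb ω).1, (hb ω).2⟩
      nlinarith
    have := exp_le_quad hx
    have hsq : (-η * Y ω) ^ 2 ≤ η ^ 2 := by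
      have h1 : |Y ω| ≤ 1 := abs_le.mpr ⟨(hb ω).1, (hb ω).2⟩
      have hY2 : Y ω ^ 2 ≤ 1 := by nlinarith [sq_abs (Y ω), abs_nonneg (Y ω)]
      nlinarith [sq_nonneg η]
    linarith
  have hexp_int : Integrable (fun ω => Real.exp (-η * Y ω)) μ := by
    refine (integrable_const (Real.exp η)).mono'
      ((Real.measurable_exp.comp (hmeas.const_mul (-η))).aestronglyMeasurable)
      (ae_of_all _ fun ω => ?_)
    rw [Real.norm_eq_abs, abs_of_pos (Real.exp_pos _), Real.exp_le_exp]
    nlinarith [(hb ω).1]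
  have hint : ∫ ω, Real.exp (-η * Y ω) ∂μ ≤ ∫ ω, (1 + η ^ 2 - η * Y ω) ∂μ := by
    refine integral_mono hexp_int ?_ hpt
    exact (integrable_const _).sub (hYint.const_mul η)
  have heval : ∫ ω, (1 + η ^ 2 - η * Y ω) ∂μ = 1 + η ^ 2 - η * Δ := by
    rw [integral_sub (integrable_const _) (hYint.const_mul η), integral_const,
      integral_const_mul, hmean]
    simp
  rw [heval] at hint
  nlinarith

theorem softmax_potential_step {Ω : Type*} [m0 : MeasurableSpace Ω] (μ : Measure Ω)
    [IsProbabilityMeasure μ] {ι : Type*} [Fintype ι] [MeasurableSpace ι]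
    (η : ℝ) (hη : 0 < η) (hη8 : η ≤ 1 / 8)
    (Δ : ι → ℝ) (hΔ : ∀ j, 4 * η < Δ j ∧ Δ j ≤ 1)
    (Y : ℕ → ι → Ω → ℝ) (hmeas : ∀ m j, Measurable (Y m j))
    (hbound : ∀ m j ω, Y m j ω ∈ Set.Icc (-1 : ℝ) 1)
    (hmean : ∀ m j, ∫ ω, Y m j ω ∂μ = Δ j)
    (ℱ : ℕ → MeasurableSpace Ω)
    (hℱ : ∀ m, ℱ m = ⨆ (k : Fin m) (j : ι), MeasurableSpace.comap (Y k j) inferInstance)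
    (hindep : ∀ m,
      Indep (MeasurableSpace.comap (fun ω (j : ι) => Y m j ω) inferInstance) (ℱ m) μ)
    (D : ℕ → ι → Ω → ℝ) (hD : ∀ m j ω, D m j ω = ∑ k ∈ Finset.range m, Y k j ω)
    (Z : ℕ → Ω → ℝ) (hZ : ∀ m ω, Z m ω = 1 + ∑ j, Real.exp (-η * D m j ω))
    (V : ℕ → Ω → ℝ) (hV : ∀ m ω, V m ω = ∑ j, Δ j * Real.exp (-η * D m j ω) / Z m ω)
    (m : ℕ) :
    ∀ᵐ ω ∂μ,
      (μ[fun ω' => Real.log (Z (m + 1) ω') - Real.log (Z m ω') | ℱ m]) ω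
        ≤ -η * V m ω / 4 := by
  classical
  -- basic measurability and bounds
  have hDmeas : ∀ n j, Measurable (D n j) := by
    intro n j
    have : D n j = fun ω => ∑ k ∈ Finset.range n, Y k j ω := funext fun ω => hD n j ω
    rw [this]
    exact Finset.measurable_sum _ fun k _ => hmeas k j
  have hZmeas : ∀ n, Measurable (Z n) := by
    intro n
    have : Z n = fun ω => 1 + ∑ j, Real.exp (-η * D n j ω) := funext fun ω => hZ n ω
    rw [this]
    exact measurable_const.add
      (Finset.measurable_sum _ fun j _ => (((hDmeas n j).const_mul (-η)).exp))
  have hZ1 : ∀ n ω, 1 ≤ Z n ω := by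
    intro n ω
    rw [hZ]
    exact le_add_of_nonneg_right (Finset.sum_nonneg fun j _ => (Real.exp_pos _).le)
  have hZpos : ∀ n ω, 0 < Z n ω := fun n ω => lt_of_lt_of_le one_pos (hZ1 n ω)
  have hDabs : ∀ n j ω, |D n j ω| ≤ (n : ℝ) := by
    intro n j ω
    rw [hD]
    calc |∑ k ∈ Finset.range n, Y k j ω| ≤ ∑ k ∈ Finset.range n, |Y k j ω| :=
          Finset.abs_sum_le_sum_abs _ _
    _ ≤ ∑ k ∈ Finset.range n, (1 : ℝ) := Finset.sum_le_sum fun k _ =>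
          abs_le.mpr ⟨(hbound k j ω).1, (hbound k j ω).2⟩
    _ = n := by simp
  have hZub : ∀ n ω, Z n ω ≤ 1 + (Fintype.card ι : ℝ) * Real.exp (η * n) := by
    intro n ω
    rw [hZ]
    have : ∑ j, Real.exp (-η * D n j ω) ≤ ∑ _j : ι, Real.exp (η * n) := by
      refine Finset.sum_le_sum fun j _ => ?_
      rw [Real.exp_le_exp]
      have := (abs_le.mp (hDabs n j ω)).1
      nlinarith
    simp only [Finset.sum_const, Finset.card_univ, nsmul_eq_mul] at this
    linarith
  -- σ-algebra facts
  have hF_le : ℱ m ≤ m0 := by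
    rw [hℱ]
    exact iSup_le fun k => iSup_le fun j => (hmeas k j).comap_le
  have hmap : Measurable (fun ω (j : ι) => Y m j ω) :=
    measurable_pi_lambda _ fun j => hmeas m j
  have hG_le : MeasurableSpace.comap (fun ω (j : ι) => Y m j ω) inferInstance ≤ m0 :=
    hmap.comap_le
  haveI hsf : SigmaFinite (μ.trim hF_le) := inferInstance
  have hYF : ∀ k, k < m → ∀ j, Measurable[ℱ m] (Y k j) := by
    intro k hk j
    have h1 : Measurable[MeasurableSpace.comap (Y k j) inferInstance] (Y k j) :=
      Measurable.of_comap_le le_rfl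
    refine h1.mono ?_ le_rfl
    rw [hℱ]
    exact le_iSup₂ (f := fun (k : Fin m) (j : ι) =>
      MeasurableSpace.comap (Y k j) inferInstance) ⟨k, hk⟩ j
  have hDF : ∀ j, Measurable[ℱ m] (D m j) := by
    intro j
    have : D m j = fun ω => ∑ k ∈ Finset.range m, Y k j ω := funext fun ω => hD m j ω
    rw [this]
    exact Finset.measurable_sum _ fun k hk => hYF k (Finset.mem_range.mp hk) j
  have hZF : Measurable[ℱ m] (Z m) := by
    have : Z m = fun ω => 1 + ∑ j, Real.exp (-η * D m j ω) := funext fun ω => hZ m ω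
    rw [this]
    exact measurable_const.add
      (Finset.measurable_sum _ fun j _ => (((hDF j).const_mul (-η)).exp))
  -- the main players
  set Q : ι → Ω → ℝ := fun j ω => Real.exp (-η * D m j ω) / Z m ω with hQdef
  set G : ι → Ω → ℝ := fun j ω => Real.exp (-η * Y m j ω) - 1 with hGdef
  set W : Ω → ℝ := fun ω => Real.log (Z (m + 1) ω) - Real.log (Z m ω) with hWdef
  have hQF : ∀ j, Measurable[ℱ m] (Q j) := fun j => (((hDF j).const_mul (-η)).exp).div hZF
  have hQmeas : ∀ j, Measurable (Q j) := fun j => (hQF j).mono hF_le le_rfl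
  have hGmeas : ∀ j, Measurable (G j) := fun j =>
    (((hmeas m j).const_mul (-η)).exp).sub measurable_const
  have hQ01 : ∀ j ω, 0 ≤ Q j ω ∧ Q j ω ≤ 1 := by
    intro j ω
    constructor
    · exact div_nonneg (Real.exp_pos _).le (hZpos m ω).le
    · rw [div_le_one (hZpos m ω), hZ]
      have : Real.exp (-η * D m j ω) ≤ ∑ i, Real.exp (-η * D m i ω) :=
        Finset.single_le_sum (f := fun i => Real.exp (-η * D m i ω))
          (fun i _ => (Real.exp_pos _).le) (Finset.mem_univ j)
      linarith
  have hGb : ∀ j ω, |G j ω| ≤ Real.exp η + 1 := by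
    intro j ω
    have h1 : Real.exp (-η * Y m j ω) ≤ Real.exp η := by
      rw [Real.exp_le_exp]
      have := (hbound m j ω).1
      nlinarith
    have h2 : 0 < Real.exp (-η * Y m j ω) := Real.exp_pos _
    rw [abs_le]
    constructor <;> simp only [hGdef] <;> nlinarith
  -- integrability
  have hG_int : ∀ j, Integrable (G j) μ := by
    intro j
    refine (integrable_const (Real.exp η + 1)).mono' (hGmeas j).aestronglyMeasurable
      (ae_of_all _ fun ω => ?_)
    rw [Real.norm_eq_abs]; exact hGb j ω
  have hf_int : ∀ j, Integrable (Q j * G j) μ := by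
    intro j
    refine (integrable_const (Real.exp η + 1)).mono'
      ((hQmeas j).mul (hGmeas j)).aestronglyMeasurable (ae_of_all _ fun ω => ?_)
    rw [Pi.mul_apply, Real.norm_eq_abs, abs_mul]
    have h1 := hQ01 j ω
    have h2 := hGb j ω
    have h3 : 0 ≤ |G j ω| := abs_nonneg _
    calc |Q j ω| * |G j ω| = Q j ω * |G j ω| := by rw [abs_of_nonneg h1.1]
    _ ≤ 1 * (Real.exp η + 1) := by
        exact mul_le_mul h1.2 h2 h3 zero_le_one
    _ = Real.exp η + 1 := one_mul _
  have hU_int : Integrable (∑ j, Q j * G j) μ :=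
    integrable_finset_sum' _ fun j _ => hf_int j
  have hW_int : Integrable W μ := by
    have hWmeas : Measurable W := ((hZmeas (m + 1)).log).sub ((hZmeas m).log)
    set C : ℝ := Real.log (1 + (Fintype.card ι : ℝ) * Real.exp (η * (m + 1))) +
      Real.log (1 + (Fintype.card ι : ℝ) * Real.exp (η * m)) with hC
    refine (integrable_const C).mono' hWmeas.aestronglyMeasurable (ae_of_all _ fun ω => ?_)
    have hlog : ∀ n, 0 ≤ Real.log (Z n ω) ∧
        Real.log (Z n ω) ≤ Real.log (1 + (Fintype.card ι : ℝ) * Real.exp (η * n)) := by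
      intro n
      exact ⟨Real.log_nonneg (hZ1 n ω), Real.log_le_log (hZpos n ω) (hZub n ω)⟩
    have h1 := hlog (m + 1)
    have h2 := hlog m
    rw [Real.norm_eq_abs, abs_le]
    push_cast at h1 ⊢
    constructor <;> simp only [hWdef] <;> [nlinarith; nlinarith]
  -- pointwise inequality W ≤ ∑ Q * G
  have hWU : ∀ ω, W ω ≤ (∑ j, Q j * G j) ω := by
    intro ω
    have hsum : (∑ j, Q j * G j) ω = (Z (m + 1) ω - Z m ω) / Z m ω := by
      rw [Finset.sum_apply]
      have hterm : ∀ j, (Q j * G j) ω =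
          (Real.exp (-η * D (m + 1) j ω) - Real.exp (-η * D m j ω)) / Z m ω := by
        intro j
        have hDs : D (m + 1) j ω = D m j ω + Y m j ω := by
          rw [hD, hD, Finset.sum_range_succ]
        rw [Pi.mul_apply, hDs]
        have : Real.exp (-η * (D m j ω + Y m j ω)) =
            Real.exp (-η * D m j ω) * Real.exp (-η * Y m j ω) := by
          rw [← Real.exp_add]; ring_nf
        rw [this]
        show Real.exp (-η * D m j ω) / Z m ω * (Real.exp (-η * Y m j ω) - 1) = _
        ring
      rw [Finset.sum_congr rfl fun j _ => hterm j, ← Finset.sum_div]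
      congr 1
      rw [hZ (m + 1), hZ m, Finset.sum_sub_distrib]
      ring
    have hlog : W ω = Real.log (Z (m + 1) ω / Z m ω) := by
      rw [Real.log_div (hZpos _ ω).ne' (hZpos _ ω).ne']
    rw [hlog, hsum]
    have hpos : 0 < Z (m + 1) ω / Z m ω := div_pos (hZpos _ ω) (hZpos _ ω)
    calc Real.log (Z (m + 1) ω / Z m ω) ≤ Z (m + 1) ω / Z m ω - 1 :=
          Real.log_le_sub_one_of_pos hpos
    _ = (Z (m + 1) ω - Z m ω) / Z m ω := by
        rw [sub_div, div_self (hZpos m ω).ne']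
  -- conditional expectation computations
  have h1 : μ[W|ℱ m] ≤ᵐ[μ] μ[∑ j, Q j * G j|ℱ m] :=
    condExp_mono hW_int hU_int (ae_of_all _ hWU)
  have h2 : μ[∑ j, Q j * G j|ℱ m] =ᵐ[μ] ∑ j, μ[Q j * G j|ℱ m] :=
    condExp_finset_sum (fun j _ => hf_int j) (ℱ m)
  have hGsm : ∀ j, StronglyMeasurable[MeasurableSpace.comap
      (fun ω (i : ι) => Y m i ω) inferInstance] (G j) := by
    intro j
    have hc : Measurable[MeasurableSpace.comap (fun ω (i : ι) => Y m i ω) inferInstance]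
        (fun ω (i : ι) => Y m i ω) := Measurable.of_comap_le le_rfl
    have houter : Measurable (fun v : ι → ℝ => Real.exp (-η * v j) - 1) :=
      (((measurable_pi_apply (X := fun _ : ι => ℝ) j).const_mul (-η)).exp).sub measurable_const
    exact (houter.comp hc).stronglyMeasurable
  have h3 : ∀ j, μ[Q j * G j|ℱ m] =ᵐ[μ] fun ω => Q j ω * (∫ ω', G j ω' ∂μ) := by
    intro j
    have ha : μ[Q j * G j|ℱ m] =ᵐ[μ] Q j * μ[G j|ℱ m] :=
      condExp_mul_of_stronglyMeasurable_left (hQF j).stronglyMeasurable (hf_int j) (hG_int j)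
    have hb : μ[G j|ℱ m] =ᵐ[μ] fun _ => ∫ ω', G j ω' ∂μ :=
      condExp_indep_eq hG_le hF_le (hGsm j) (hindep m)
    refine ha.trans ?_
    filter_upwards [hb] with ω hω
    rw [Pi.mul_apply, hω]
  have hcbound : ∀ j, ∫ ω', G j ω' ∂μ ≤ -(η * Δ j) / 4 := by
    intro j
    have hexp_int : Integrable (fun ω => Real.exp (-η * Y m j ω)) μ := by
      refine (integrable_const (Real.exp η)).mono'
        ((((hmeas m j).const_mul (-η)).exp)).aestronglyMeasurable (ae_of_all _ fun ω => ?_)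
      rw [Real.norm_eq_abs, abs_of_pos (Real.exp_pos _), Real.exp_le_exp]
      nlinarith [(hbound m j ω).1]
    have hGe : ∀ ω', G j ω' = Real.exp (-η * Y m j ω') - 1 := fun _ => rfl
    have this1 : ∫ ω', G j ω' ∂μ = (∫ ω', Real.exp (-η * Y m j ω') ∂μ) - 1 := by
      simp_rw [hGe]
      rw [integral_sub hexp_int (integrable_const 1), integral_const]
      simp
    rw [this1]
    have := moment_bound μ hη hη8 (hΔ j).1 (hmeas m j) (fun ω => hbound m j ω) (hmean m j)
    linarith
  -- combine
  have h3' : ∀ᵐ ω ∂μ, ∀ j, (μ[Q j * G j|ℱ m]) ω = Q j ω * (∫ ω', G j ω' ∂μ) :=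
    ae_all_iff.mpr fun j => h3 j
  filter_upwards [h1, h2, h3'] with ω hω1 hω2 hω3
  have key : (μ[W|ℱ m]) ω ≤ ∑ j, Q j ω * (∫ ω', G j ω' ∂μ) := by
    refine le_trans hω1 (le_of_eq ?_)
    rw [hω2, Finset.sum_apply]
    exact Finset.sum_congr rfl fun j _ => hω3 j
  have hfinal : ∑ j, Q j ω * (∫ ω', G j ω' ∂μ) ≤ -η * V m ω / 4 := by
    have heq : -η * V m ω / 4 = ∑ j, Q j ω * (-(η * Δ j) / 4) := by
      rw [hV, Finset.mul_sum, Finset.sum_div]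
      refine Finset.sum_congr rfl fun j _ => ?_
      show _ = Real.exp (-η * D m j ω) / Z m ω * (-(η * Δ j) / 4)
      ring
    rw [heq]
    refine Finset.sum_le_sum fun j _ => ?_
    exact mul_le_mul_of_nonneg_left (hcbound j) (hQ01 j ω).1
  exact key.trans hfinal
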